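/- Let G = (V, E) be a directed graph with V = {v₁,…,v_p}. Let G' be the directed graph on the node set V^s ∪ V ∪ V^t, where V^s = {v₁^s,…,v_p^s} and V^t = {v₁^t,…,v_p^t} are disjoint copies of V, whose edges are v_i^s → v_i and v_i → v_i^t for every i, together with v_i → v_j for every edge v_i → v_j ∈ E. Then for all i ≠ j, the latent projection of G' over L := V contains the directed edge v_i^s → v_j^t if and only if the transitive closure of G contains the edge v_i → v_j, i.e., there is a directed path from v_i to v_j in G. -/

import Mathlib

/-- The latent projection (over the latent set `L`) of a directed graph with edge relation
`R` contains the directed edge `a → b` (for observed `a, b ∉ L`) exactly when there is a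
directed path from `a` to `b` all of whose non-endpoint nodes lie in `L`. -/
def ProjDirEdge {α : Type} (R : α → α → Prop) (L : Set α) (a b : α) : Prop :=
  a ∉ L ∧ b ∉ L ∧ ∃ l : List α, (∀ v ∈ l, v ∈ L) ∧
    List.Chain R a (l ++ [b]) ∧ (a :: (l ++ [b])).Nodup

/-- The directed graph `G'` on `V^s ⊕ V ⊕ V^t` (where `V = Fin p` and `V^s`, `V^t` are
disjoint copies of `V`) with edges `vᵢˢ → vᵢ` and `vᵢ → vᵢᵗ` for every `i`, together with
`vᵢ → vⱼ` for every edge `vᵢ → vⱼ` of `G`. -/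
def tcGraph {p : ℕ} (E : Fin p → Fin p → Prop) :
    (Fin p ⊕ Fin p ⊕ Fin p) → (Fin p ⊕ Fin p ⊕ Fin p) → Prop
  | Sum.inl i, Sum.inr (Sum.inl j) => i = j
  | Sum.inr (Sum.inl i), Sum.inr (Sum.inr j) => i = j
  | Sum.inr (Sum.inl i), Sum.inr (Sum.inl j) => E i j
  | _, _ => False

/-- The middle copy of `V`, taken as the latent nodes. -/
def tcLatent (p : ℕ) : Set (Fin p ⊕ Fin p ⊕ Fin p) :=
  {v | ∃ k : Fin p, v = Sum.inr (Sum.inl k)}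

/-!
Every latent node of `G'` is a copy `vₖ` of a node of `G`, and the edges of `G'` between latent
nodes are exactly those of `G`. Hence a path `vᵢˢ → vₖ₀ → ⋯ → vₖₙ → vⱼᵗ` through latent nodes is
forced to have `k₀ = i` and `kₙ = j`, and is the same thing as a path of `G` from `vᵢ` to `vⱼ`.
Conversely, a walk of `G` from `vᵢ` to `vⱼ ≠ vᵢ` becomes a path once its cycles are cut out.
-/

theorem Relation.ReflTransGen.exists_nodup_isChain {α : Type*} {r : α → α → Prop} {a b : α}
    (h : Relation.ReflTransGen r a b) (hab : a ≠ b) :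
    ∃ l, (a :: l ++ [b]).IsChain r ∧ (a :: l ++ [b]).Nodup := by
  induction h using Relation.ReflTransGen.head_induction_on with
  | refl => exact absurd rfl hab
  | @head a c hac _ ih =>
    by_cases hc : c = b
    · subst hc
      exact ⟨[], by simpa using hac, by simpa using hab⟩
    obtain ⟨l, hchain, hnodup⟩ := ih hc
    by_cases ha : a ∈ c :: l
    · -- the chain from `c` revisits `a`: keep only its part after that visit
      obtain ⟨l₁, l₂, hsplit⟩ := List.append_of_mem ha
      have hsuffix : a :: l₂ ++ [b] <:+ c :: l ++ [b] := by
        rw [hsplit, List.append_assoc]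
        exact List.suffix_append l₁ _
      exact ⟨l₂, hchain.suffix hsuffix, hnodup.sublist hsuffix.sublist⟩
    · refine ⟨c :: l, List.isChain_cons_cons.2 ⟨hac, hchain⟩, List.nodup_cons.2 ⟨?_, hnodup⟩⟩
      simpa [hab] using ha

section tcGraph

variable {p : ℕ} (E : Fin p → Fin p → Prop)

theorem tcLatent_eq_range : tcLatent p = Set.range (Sum.inr ∘ Sum.inl) := by
  ext v
  simp [tcLatent, eq_comm]

theorem isChain_tcGraph_map_append_iff (k j : Fin p) (l : List (Fin p)) :
    ((k :: l).map (Sum.inr ∘ Sum.inl) ++ [Sum.inr (Sum.inr j)]).IsChain (tcGraph E) ↔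
      (k :: l).IsChain E ∧ (k :: l).getLast (List.cons_ne_nil _ _) = j := by
  rw [List.isChain_append, List.isChain_map, List.getLast?_map,
    List.getLast?_eq_some_getLast (List.cons_ne_nil k l)]
  simp [tcGraph]

theorem nodup_tcGraph_path_iff (i j : Fin p) (l : List (Fin p)) :
    (Sum.inl i :: (l.map (Sum.inr ∘ Sum.inl) ++ [Sum.inr (Sum.inr j)])).Nodup ↔ l.Nodup := by
  simp [List.nodup_append, List.nodup_map_iff (Sum.inr_injective.comp Sum.inl_injective)]

theorem projDirEdge_tcGraph_iff (i j : Fin p) :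
    ProjDirEdge (tcGraph E) (tcLatent p) (Sum.inl i) (Sum.inr (Sum.inr j)) ↔
      ∃ l : List (Fin p), (i :: l).IsChain E ∧ (i :: l).getLast (List.cons_ne_nil _ _) = j ∧
        (i :: l).Nodup := by
  have hobs : Sum.inl i ∉ tcLatent p ∧ Sum.inr (Sum.inr j) ∉ tcLatent p := by simp [tcLatent]
  have hlatent (l : List (Fin p ⊕ Fin p ⊕ Fin p)) :
      (∀ v ∈ l, v ∈ tcLatent p) ↔ l ∈ Set.range (List.map (Sum.inr ∘ Sum.inl)) := by
    rw [Set.range_list_map, tcLatent_eq_range]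
    rfl
  simp only [ProjDirEdge, hobs, not_false_eq_true, true_and, hlatent, Set.exists_range_iff,
    nodup_tcGraph_path_iff]
  constructor
  · rintro ⟨_ | ⟨k, l⟩, hchain, hnodup⟩
    · exact (List.isChain_cons_cons.1 hchain).1.elim
    · obtain ⟨rfl, hchain⟩ := List.isChain_cons_cons.1 hchain
      obtain ⟨hchain, hlast⟩ := (isChain_tcGraph_map_append_iff E i j l).1 hchain
      exact ⟨l, hchain, hlast, hnodup⟩
  · rintro ⟨l, hchain, hlast, hnodup⟩
    exact ⟨i :: l, List.isChain_cons_cons.2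
      ⟨rfl, (isChain_tcGraph_map_append_iff E i j l).2 ⟨hchain, hlast⟩⟩, hnodup⟩

end tcGraph

/-- For all `i ≠ j`, the latent projection of `G'` over `L := V` contains
the directed edge `vᵢˢ → vⱼᵗ` if and only if the transitive closure of `G` contains the
edge `vᵢ → vⱼ`, i.e., there is a directed path from `vᵢ` to `vⱼ` in `G`. -/
theorem latent_projection_edge_iff_transitive_closure {p : ℕ} (E : Fin p → Fin p → Prop) :
    ∀ i j : Fin p, i ≠ j →
      (ProjDirEdge (tcGraph E) (tcLatent p) (Sum.inl i) (Sum.inr (Sum.inr j)) ↔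
        Relation.TransGen E i j) := by
  intro i j hij
  rw [projDirEdge_tcGraph_iff]
  constructor
  · rintro ⟨l, hchain, hlast, -⟩
    obtain h | h := Relation.reflTransGen_iff_eq_or_transGen.1
      (List.relationReflTransGen_of_exists_isChain_cons l hchain hlast)
    · exact absurd h.symm hij
    · exact h
  · intro h
    obtain ⟨l, hchain, hnodup⟩ := h.to_reflTransGen.exists_nodup_isChain hij
    exact ⟨l ++ [j], hchain, by simp, hnodup⟩
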